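/- Let A = σ(R)⟨x_1,…,x_n⟩ be a skew PBW extension of a ring R with the elements c_{i,j} of condition (iv) central in R, and suppose R is Σ-compatible and (Σ,Δ)-skew Armendariz. If p_1, p_2, …, p_l are elements of A (l ≥ 2) with p_1 p_2 ⋯ p_l = 0, then for every choice of coefficients a_k ∈ C_{p_k} (k = 1, …, l), where C_p denotes the set of coefficients of p in its unique expansion in standard monomials, one has a_1 a_2 ⋯ a_l = 0 in R. -/

import Mathlib

open scoped BigOperators

/-- Iterated "power composition": given a family of maps `f i` and multiplicities `k i`,
`iterPow f k = (f 0)^[k 0] ∘ (f 1)^[k 1] ∘ ⋯ ∘ (f (n-1))^[k (n-1)]`.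
For a family of endomorphisms `σ` this is `σ^α = σ₁^{α₁} ∘ ⋯ ∘ σₙ^{αₙ}`. -/
def iterPow {α : Type*} {n : ℕ} (f : Fin n → α → α) (k : Fin n → ℕ) : α → α :=
  (((List.finRange n).map fun i => (f i)^[k i]).foldr (· ∘ ·) id)

/-- A skew PBW extension `A = σ(R)⟨x₁,…,xₙ⟩` of a ring `R`. -/
structure SkewPBW (R A : Type*) [Ring R] [Ring A] (n : ℕ) where
  /-- the inclusion `R ⊆ A` (a ring embedding) -/
  ι : R →+* A
  ι_inj : Function.Injective ι
  /-- the variables `x₁,…,xₙ` -/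
  x : Fin n → A
  /-- `A` is a free left `R`-module with basis the standard monomials
  `x^α = x₁^{α₁} ⋯ xₙ^{αₙ}`: every element of `A` is a unique finite
  `R`-linear combination of standard monomials. -/
  free : Function.Bijective
    (fun c : (Fin n → ℕ) →₀ R =>
      c.sum fun α r => ι r * (((List.finRange n).map fun i => x i ^ α i).prod))
  /-- condition (iii): for each `i` and each nonzero `r ∈ R` there is a nonzero
  `c_{i,r} ∈ R` with `xᵢ r − c_{i,r} xᵢ ∈ R` -/
  lin : ∀ (i : Fin n) (r : R), r ≠ 0 → ∃ cr : R, cr ≠ 0 ∧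
    ∃ r' : R, x i * ι r - ι cr * x i = ι r'
  /-- the constants `c_{i,j}` of condition (iv) -/
  c : Fin n → Fin n → R
  c_ne : ∀ i j, c i j ≠ 0
  /-- condition (iv): `xⱼ xᵢ − c_{i,j} xᵢ xⱼ ∈ R + R x₁ + ⋯ + R xₙ` -/
  quad : ∀ i j, ∃ (r₀ : R) (r : Fin n → R),
    x j * x i - ι (c i j) * (x i * x j) = ι r₀ + ∑ k, ι (r k) * x k
  /-- the injective endomorphisms `σᵢ` -/
  σ : Fin n → R →+* R
  σ_inj : ∀ i, Function.Injective (σ i)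
  /-- the `σᵢ`-derivations `δᵢ` -/
  δ : Fin n → R → R
  δ_add : ∀ (i : Fin n) (a b : R), δ i (a + b) = δ i a + δ i b
  δ_leibniz : ∀ (i : Fin n) (a b : R), δ i (a * b) = σ i a * δ i b + δ i a * b
  /-- the fundamental relation `xᵢ r = σᵢ(r) xᵢ + δᵢ(r)` -/
  comm : ∀ (i : Fin n) (r : R), x i * ι r = ι (σ i r) * x i + ι (δ i r)

namespace SkewPBW

variable {R A : Type*} [Ring R] [Ring A] {n : ℕ}

/-- The standard monomial `x^α = x₁^{α₁} ⋯ xₙ^{αₙ}`. -/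
def mono (S : SkewPBW R A n) (α : Fin n → ℕ) : A :=
  ((List.finRange n).map fun i => S.x i ^ α i).prod

/-- `σ^α = σ₁^{α₁} ∘ ⋯ ∘ σₙ^{αₙ}`. -/
def sigmaPow (S : SkewPBW R A n) (α : Fin n → ℕ) : R → R :=
  iterPow (fun i => ⇑(S.σ i)) α

/-- `δ^α = δ₁^{α₁} ∘ ⋯ ∘ δₙ^{αₙ}`. -/
def deltaPow (S : SkewPBW R A n) (α : Fin n → ℕ) : R → R :=
  iterPow S.δ α

/-- `R` is `Σ`-compatible: `a σ^α(b) = 0 ↔ a b = 0`. -/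
def SigmaCompatible (S : SkewPBW R A n) : Prop :=
  ∀ (a b : R) (α : Fin n → ℕ), a * S.sigmaPow α b = 0 ↔ a * b = 0

/-- `R` is `Δ`-compatible: `a b = 0 → a δ^β(b) = 0`. -/
def DeltaCompatible (S : SkewPBW R A n) : Prop :=
  ∀ a b : R, a * b = 0 → ∀ β : Fin n → ℕ, a * S.deltaPow β b = 0

/-- `R` is `(Σ,Δ)`-compatible. -/
def SigmaDeltaCompatible (S : SkewPBW R A n) : Prop :=
  S.SigmaCompatible ∧ S.DeltaCompatible

/-- The elements `c_{i,j}` of condition (iv) are central in `R`. -/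
def CCentral (S : SkewPBW R A n) : Prop :=
  ∀ (i j : Fin n) (r : R), S.c i j * r = r * S.c i j

/-- `R` is `(Σ,Δ)`-skew Armendariz with respect to `A`:
if `fg = 0` then `aᵢXᵢ · bⱼYⱼ = 0` for all coefficients/monomials of `f` and `g`. -/
def SDSkewArmendariz (S : SkewPBW R A n) : Prop :=
  ∀ (t s : ℕ) (a : Fin (t + 1) → R) (X : Fin (t + 1) → Fin n → ℕ)
    (b : Fin (s + 1) → R) (Y : Fin (s + 1) → Fin n → ℕ),
    Function.Injective X → Function.Injective Y →
    (∑ i, S.ι (a i) * S.mono (X i)) * (∑ j, S.ι (b j) * S.mono (Y j)) = 0 →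
    ∀ i j, (S.ι (a i) * S.mono (X i)) * (S.ι (b j) * S.mono (Y j)) = 0

/-- `R` is `Σ`-skew Armendariz with respect to `A`:
if `fg = 0` then `aᵢ σ^{αᵢ}(bⱼ) = 0` where `αᵢ = exp(Xᵢ)`. -/
def SigmaSkewArmendariz (S : SkewPBW R A n) : Prop :=
  ∀ (m t : ℕ) (a : Fin (m + 1) → R) (X : Fin (m + 1) → Fin n → ℕ)
    (b : Fin (t + 1) → R) (Y : Fin (t + 1) → Fin n → ℕ),
    Function.Injective X → Function.Injective Y →
    (∑ i, S.ι (a i) * S.mono (X i)) * (∑ j, S.ι (b j) * S.mono (Y j)) = 0 →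
    ∀ i j, a i * S.sigmaPow (X i) (b j) = 0

/-- `R` is skew `Π`-Armendariz with respect to `A`:
if `fg` is nilpotent in `A`, then `aᵢ bⱼ` is nilpotent in `R` for all `i, j`. -/
def SkewPiArmendariz (S : SkewPBW R A n) : Prop :=
  ∀ (m t : ℕ) (a : Fin (m + 1) → R) (X : Fin (m + 1) → Fin n → ℕ)
    (b : Fin (t + 1) → R) (Y : Fin (t + 1) → Fin n → ℕ),
    Function.Injective X → Function.Injective Y →
    IsNilpotent ((∑ i, S.ι (a i) * S.mono (X i)) * (∑ j, S.ι (b j) * S.mono (Y j))) →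
    ∀ i j, IsNilpotent (a i * b j)

end SkewPBW

/-- A ring is reversible if `a b = 0` implies `b a = 0`. -/
def IsReversible (R : Type*) [Ring R] : Prop :=
  ∀ a b : R, a * b = 0 → b * a = 0

/-!
Since the `c_{i,j}` are central, relation (iv) read for `(i, j)` and for `(j, i)` forces them to be
units. Consequently `x^γ x^β = C x^{γ+β} + (lower total degree)` with `C` a unit, and the leading
coefficient of `(a x^α)(b x^β)` is `a σ^α(b) C`; so if this product vanishes, `a σ^α(b) = 0`, that
is `ab = 0` by `Σ`-compatibility. With the Armendariz property this gives: if `pq = 0` then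
`aq = 0` for every coefficient `a` of `p`. Hence `p₁ p₂ ⋯ p_l = 0` implies `(a₁p₂) p₃ ⋯ p_l = 0`,
and induction on `l` concludes.
-/

section ExponentVectors

variable {n : ℕ}

def totalDeg (γ : Fin n → ℕ) : ℕ := ∑ i, γ i

lemma totalDeg_add (γ μ : Fin n → ℕ) : totalDeg (γ + μ) = totalDeg γ + totalDeg μ :=
  Finset.sum_add_distrib

lemma totalDeg_single (j : Fin n) : totalDeg (Pi.single j 1 : Fin n → ℕ) = 1 := by
  simp [totalDeg]

lemma totalDeg_lt_totalDeg {μ γ : Fin n → ℕ} (h : μ < γ) : totalDeg μ < totalDeg γ := by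
  obtain ⟨hle, i, hi⟩ := Pi.lt_def.mp h
  exact Finset.sum_lt_sum (fun i _ => hle i) ⟨i, Finset.mem_univ i, hi⟩

lemma add_single_eq_of_lt {γ : Fin n → ℕ} {i j : Fin n} (h : j < i) :
    (γ + Pi.single j 1 : Fin n → ℕ) i = γ i := by
  simp [Pi.single_eq_of_ne h.ne']

lemma lt_add_single (γ : Fin n → ℕ) (j : Fin n) : γ < γ + Pi.single j 1 :=
  Pi.lt_def.mpr ⟨fun _ => Nat.le_add_right _ _, j, by simp⟩

lemma exists_eq_add_single_of_ne_zero {γ : Fin n → ℕ} (h : γ ≠ 0) :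
    ∃ (γ' : Fin n → ℕ) (j : Fin n), (∀ i, j < i → γ' i = 0) ∧ γ = γ' + Pi.single j 1 := by
  obtain ⟨i₀, hi₀⟩ : ∃ i, γ i ≠ 0 := by
    by_contra! hzero
    exact h (funext hzero)
  have hsupp : (Finset.univ.filter fun i => γ i ≠ 0).Nonempty := ⟨i₀, by simpa using hi₀⟩
  set j := (Finset.univ.filter fun i => γ i ≠ 0).max' hsupp
  have hj : γ j ≠ 0 := (Finset.mem_filter.mp (Finset.max'_mem _ hsupp)).2
  have hlast : ∀ i, j < i → γ i = 0 := fun i hi => by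
    by_contra hγi
    exact (Finset.le_max' _ i (by simpa using hγi)).not_gt hi
  refine ⟨γ - Pi.single j 1, j, fun i hi => by simp [hlast i hi], ?_⟩
  refine (tsub_add_cancel_of_le fun i => ?_).symm
  rcases eq_or_ne i j with rfl | hij
  · simpa using Nat.one_le_iff_ne_zero.mpr hj
  · simp [Pi.single_eq_of_ne hij]

theorem expVec_induction {P : (Fin n → ℕ) → Prop} (zero : P 0)
    (add_single : ∀ γ j, (∀ i, j < i → γ i = 0) → (∀ μ, totalDeg μ ≤ totalDeg γ → P μ) →
      P (γ + Pi.single j 1))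
    (γ : Fin n → ℕ) : P γ := by
  induction hd : totalDeg γ using Nat.strong_induction_on generalizing γ with
  | _ d ih =>
    rcases eq_or_ne γ 0 with rfl | hγ
    · exact zero
    obtain ⟨γ', j, hγ', rfl⟩ := exists_eq_add_single_of_ne_zero hγ
    have hdeg : totalDeg γ' < d := by rw [← hd, totalDeg_add, totalDeg_single]; omega
    exact add_single γ' j hγ' fun μ hμ => ih _ (hμ.trans_lt hdeg) μ rfl

end ExponentVectors

section OrderedPow

variable {M : Type*} [Monoid M] {n : ℕ}

def orderedPow (y : Fin n → M) (γ : Fin n → ℕ) : M :=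
  ((List.finRange n).map fun i => y i ^ γ i).prod

lemma orderedPow_zero (y : Fin n → M) : orderedPow y 0 = 1 := by
  simp [orderedPow]

lemma lt_of_mem_take_finRange {i j : Fin n} (h : i ∈ (List.finRange n).take j) : i < j := by
  obtain ⟨k, hk, rfl⟩ := List.mem_iff_getElem.mp h
  simp only [List.length_take, List.length_finRange, lt_min_iff] at hk
  simp [Fin.lt_def, hk.1]

lemma orderedPow_eq_prod_take_mul {y : Fin n → M} {γ : Fin n → ℕ} {j : Fin n}
    (h : ∀ i, j < i → γ i = 0) :
    orderedPow y γ = (((List.finRange n).take j).map fun i => y i ^ γ i).prod * y j ^ γ j := by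
  have hdrop : (List.finRange n).drop j = j :: (List.finRange n).drop (j + 1) := by
    rw [List.drop_eq_getElem_cons (by simp)]
    simp
  have htail : (((List.finRange n).drop (j + 1)).map fun i => y i ^ γ i).prod = 1 := by
    refine List.prod_eq_one fun z hz => ?_
    obtain ⟨i, hi, rfl⟩ := List.mem_map.mp hz
    obtain ⟨k, hk, rfl⟩ := List.mem_iff_getElem.mp hi
    rw [h _ (by simp [Fin.lt_def]; omega), pow_zero]
  rw [orderedPow]
  conv_lhs => rw [← List.take_append_drop j (List.finRange n)]
  rw [hdrop, List.map_append, List.prod_append, List.map_cons, List.prod_cons, htail, mul_one]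

lemma orderedPow_add_single (y : Fin n → M) {γ : Fin n → ℕ} {j : Fin n}
    (h : ∀ i, j < i → γ i = 0) : orderedPow y (γ + Pi.single j 1) = orderedPow y γ * y j := by
  have h' : ∀ i, j < i → (γ + Pi.single j 1 : Fin n → ℕ) i = 0 := fun i hi => by
    rw [add_single_eq_of_lt hi, h i hi]
  have hhead : ((List.finRange n).take j).map (fun i => y i ^ (γ + Pi.single j 1 : Fin n → ℕ) i) =
      ((List.finRange n).take j).map (fun i => y i ^ γ i) := by
    refine List.map_congr_left fun i hi => ?_
    rw [Pi.add_apply, Pi.single_eq_of_ne (lt_of_mem_take_finRange hi).ne, add_zero]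
  rw [orderedPow_eq_prod_take_mul h', orderedPow_eq_prod_take_mul h, hhead, mul_assoc]
  simp [pow_succ]

lemma orderedPow_single (y : Fin n → M) (j : Fin n) : orderedPow y (Pi.single j 1) = y j := by
  simpa [orderedPow_zero] using orderedPow_add_single y (γ := 0) (j := j) fun _ _ => rfl

end OrderedPow

namespace SkewPBW

variable {R A : Type*} [Ring R] [Ring A] {n : ℕ} (S : SkewPBW R A n)

lemma mono_zero : S.mono 0 = 1 := orderedPow_zero _

lemma mono_single (j : Fin n) : S.mono (Pi.single j 1) = S.x j := orderedPow_single _ _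

lemma mono_add_single {γ : Fin n → ℕ} {j : Fin n} (h : ∀ i, j < i → γ i = 0) :
    S.mono (γ + Pi.single j 1) = S.mono γ * S.x j :=
  orderedPow_add_single _ h

lemma sigmaPow_eq_orderedPow (α : Fin n → ℕ) : S.sigmaPow α = ⇑(orderedPow S.σ α) := by
  have hfold : ∀ L : List (R →+* R), (L.map (⇑)).foldr (· ∘ ·) id = ⇑L.prod := by
    intro L
    induction L with
    | nil => rfl
    | cons f L ih => simp [ih]
  simp only [sigmaPow, iterPow, orderedPow, ← hfold, List.map_map]
  congr 1

lemma sigmaPow_add_single {γ : Fin n → ℕ} {j : Fin n} (h : ∀ i, j < i → γ i = 0) (b : R) :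
    S.sigmaPow (γ + Pi.single j 1) b = S.sigmaPow γ (S.σ j b) := by
  simp [sigmaPow_eq_orderedPow, orderedPow_add_single _ h]

lemma sigmaPow_zero (b : R) : S.sigmaPow 0 b = b := by
  simp [sigmaPow_eq_orderedPow, orderedPow_zero]

lemma isUnit_sigmaPow (α : Fin n → ℕ) {c : R} (hc : IsUnit c) : IsUnit (S.sigmaPow α c) := by
  rw [sigmaPow_eq_orderedPow]
  exact hc.map _

noncomputable def repr : A ≃+ ((Fin n → ℕ) →₀ R) :=
  (AddEquiv.ofBijective
    (Finsupp.liftAddHom fun γ => (AddMonoidHom.mulRight (S.mono γ)).comp S.ι.toAddMonoidHom)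
    (by convert S.free using 1; ext c; rw [Finsupp.liftAddHom_apply]; rfl)).symm

lemma repr_symm_apply (c : (Fin n → ℕ) →₀ R) :
    S.repr.symm c = c.sum fun γ r => S.ι r * S.mono γ :=
  Finsupp.liftAddHom_apply _ _

lemma repr_ι_mul_mono (r : R) (γ : Fin n → ℕ) :
    S.repr (S.ι r * S.mono γ) = Finsupp.single γ r := by
  rw [← AddEquiv.eq_symm_apply, repr_symm_apply, Finsupp.sum_single_index (by simp)]

lemma repr_ι_mul (r : R) (p : A) : S.repr (S.ι r * p) = r • S.repr p := by
  rw [← AddEquiv.eq_symm_apply, repr_symm_apply, Finsupp.sum_smul_index (by simp)]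
  conv_lhs => rw [← S.repr.symm_apply_apply p, repr_symm_apply, Finsupp.mul_sum]
  simp only [map_mul, mul_assoc]

lemma sum_repr (p : A) : ∑ γ ∈ (S.repr p).support, S.ι (S.repr p γ) * S.mono γ = p := by
  conv_rhs => rw [← S.repr.symm_apply_apply p, repr_symm_apply]
  rfl

lemma repr_sum_apply_of_injective {t : ℕ} (a : Fin t → R) {X : Fin t → Fin n → ℕ}
    (hX : Function.Injective X) (i : Fin t) :
    S.repr (∑ k, S.ι (a k) * S.mono (X k)) (X i) = a i := by
  simp only [map_sum, repr_ι_mul_mono, Finsupp.finsetSum_apply]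
  rw [Finset.sum_eq_single i (fun k _ hk => Finsupp.single_eq_of_ne' (hX.ne hk)) (by simp),
    Finsupp.single_eq_same]

noncomputable def supported (s : Set (Fin n → ℕ)) : AddSubgroup A :=
  (Finsupp.supported R R s).toAddSubgroup.comap S.repr.toAddMonoidHom

lemma mem_supported {s : Set (Fin n → ℕ)} {p : A} :
    p ∈ S.supported s ↔ ∀ γ ∉ s, S.repr p γ = 0 :=
  Finsupp.mem_supported' R _

lemma supported_mono {s t : Set (Fin n → ℕ)} (h : s ⊆ t) : S.supported s ≤ S.supported t :=
  fun _ hp => Finsupp.supported_mono (M := R) (R := R) h hp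

lemma ι_mul_mem_supported {s : Set (Fin n → ℕ)} {p : A} (r : R) (hp : p ∈ S.supported s) :
    S.ι r * p ∈ S.supported s := by
  simp only [mem_supported, repr_ι_mul] at hp ⊢
  intro γ hγ
  simp [hp γ hγ]

lemma ι_mul_mono_mem_supported {s : Set (Fin n → ℕ)} (r : R) {γ : Fin n → ℕ} (hγ : γ ∈ s) :
    S.ι r * S.mono γ ∈ S.supported s := by
  simp only [mem_supported, repr_ι_mul_mono]
  exact fun μ hμ => Finsupp.single_eq_of_ne' (ne_of_mem_of_not_mem hγ hμ)

lemma mul_mem_supported {s t : Set (Fin n → ℕ)} {p y : A} (hp : p ∈ S.supported s)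
    (hy : ∀ μ ∈ s, S.mono μ * y ∈ S.supported t) : p * y ∈ S.supported t := by
  rw [← S.sum_repr p, Finset.sum_mul]
  refine AddSubgroup.sum_mem _ fun μ hμ => ?_
  rw [mul_assoc]
  refine S.ι_mul_mem_supported _ (hy μ ?_)
  by_contra hμs
  exact Finsupp.mem_support_iff.mp hμ (S.mem_supported.mp hp μ hμs)

lemma repr_ι_mul_mono_add_apply {s : Set (Fin n → ℕ)} {q : A} (hq : q ∈ S.supported s)
    (r : R) {γ : Fin n → ℕ} (hγ : γ ∉ s) : S.repr (S.ι r * S.mono γ + q) γ = r := by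
  rw [map_add, Finsupp.add_apply, repr_ι_mul_mono, Finsupp.single_eq_same,
    S.mem_supported.mp hq γ hγ, add_zero]

noncomputable abbrev degreeLT (m : ℕ) : AddSubgroup A := S.supported {μ | totalDeg μ < m}

lemma degreeLT_mono {m m' : ℕ} (h : m ≤ m') : S.degreeLT m ≤ S.degreeLT m' :=
  S.supported_mono fun _ hμ => lt_of_lt_of_le hμ h

lemma mono_mem_supported {s : Set (Fin n → ℕ)} {γ : Fin n → ℕ} (hγ : γ ∈ s) :
    S.mono γ ∈ S.supported s := by
  simpa using S.ι_mul_mono_mem_supported 1 hγ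

lemma exists_mono_mul_ι (α : Fin n → ℕ) (b : R) :
    ∃ q ∈ S.supported (Set.Iio α), S.mono α * S.ι b = S.ι (S.sigmaPow α b) * S.mono α + q := by
  induction α using expVec_induction generalizing b with
  | zero => exact ⟨0, zero_mem _, by simp [mono_zero, sigmaPow_zero]⟩
  | add_single γ j hγ ih =>
    obtain ⟨q₁, hq₁, e₁⟩ := ih γ le_rfl (S.σ j b)
    obtain ⟨q₂, hq₂, e₂⟩ := ih γ le_rfl (S.δ j b)
    have hlt := lt_add_single γ j
    refine ⟨q₁ * S.x j + S.ι (S.sigmaPow γ (S.δ j b)) * S.mono γ + q₂, ?_, ?_⟩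
    · refine add_mem (add_mem ?_ (S.ι_mul_mono_mem_supported _ hlt))
        (S.supported_mono (Set.Iio_subset_Iio hlt.le) hq₂)
      refine S.mul_mem_supported hq₁ fun μ (hμ : μ < γ) => ?_
      rw [← S.mono_add_single fun i hi => Nat.eq_zero_of_le_zero (hγ i hi ▸ hμ.le i)]
      exact S.mono_mem_supported (add_lt_add_left hμ _ : _ < _)
    · calc S.mono (γ + Pi.single j 1) * S.ι b
          = S.mono γ * S.ι (S.σ j b) * S.x j + S.mono γ * S.ι (S.δ j b) := by
            rw [S.mono_add_single hγ, mul_assoc, S.comm, mul_add, mul_assoc]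
        _ = _ := by
            rw [e₁, e₂, S.sigmaPow_add_single hγ, S.mono_add_single hγ]
            simp only [add_mul, mul_assoc]
            abel

lemma mono_mul_ι_mem_degreeLT (γ : Fin n → ℕ) (r : R) :
    S.mono γ * S.ι r ∈ S.degreeLT (totalDeg γ + 1) := by
  obtain ⟨q, hq, e⟩ := S.exists_mono_mul_ι γ r
  rw [e]
  refine add_mem (S.ι_mul_mono_mem_supported _ (Nat.lt_succ_self _))
    (S.supported_mono (fun μ hμ => ?_) hq)
  exact (totalDeg_lt_totalDeg hμ).trans (Nat.lt_succ_self _)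

lemma ι_add_sum_ι_mul_x_mem_degreeLT (r₀ : R) (r : Fin n → R) :
    S.ι r₀ + ∑ i, S.ι (r i) * S.x i ∈ S.degreeLT 2 := by
  refine add_mem ?_ (AddSubgroup.sum_mem _ fun i _ => ?_)
  · have := S.ι_mul_mono_mem_supported r₀ (s := {μ | totalDeg μ < 2}) (γ := 0) (by simp [totalDeg])
    rwa [mono_zero, mul_one] at this
  · rw [← S.mono_single]
    exact S.ι_mul_mono_mem_supported _ (by simp [totalDeg_single])

/-- Comparing coefficients of `x_j x_k` in the two relations (iv) for `(j, k)` and `(k, j)` gives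
`c_{k,j} c_{j,k} = 1`. -/
lemma isUnit_c (hc : S.CCentral) {j k : Fin n} (hjk : j < k) : IsUnit (S.c j k) := by
  obtain ⟨r₀, r, hjk'⟩ := S.quad j k
  obtain ⟨s₀, s, hkj'⟩ := S.quad k j
  rw [sub_eq_iff_eq_add'] at hjk' hkj'
  set u : Fin n → ℕ := Pi.single j 1 + Pi.single k 1
  have hu : S.x j * S.x k = S.mono u := by
    rw [S.mono_add_single fun i hi => Pi.single_eq_of_ne (hjk.trans hi).ne' _, mono_single]
  have hdeg : u ∉ {μ | totalDeg μ < 2} := by simp [u, totalDeg_add, totalDeg_single]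
  have hexp : S.mono u = S.ι (S.c k j * S.c j k) * S.mono u +
      (S.ι (S.c k j) * (S.ι r₀ + ∑ i, S.ι (r i) * S.x i) + (S.ι s₀ + ∑ i, S.ι (s i) * S.x i)) := by
    rw [← hu, map_mul, mul_assoc]
    conv_lhs => rw [hkj', hjk']
    rw [mul_add]
    abel
  have hone : S.c k j * S.c j k = 1 := by
    have := congrArg (S.repr · u) hexp
    rwa [S.repr_ι_mul_mono_add_apply (add_mem (S.ι_mul_mem_supported _
      (S.ι_add_sum_ι_mul_x_mem_degreeLT _ _)) (S.ι_add_sum_ι_mul_x_mem_degreeLT _ _)) _ hdeg,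
      ← one_mul (S.mono u), ← map_one S.ι, repr_ι_mul_mono, Finsupp.single_eq_same, eq_comm]
      at this
  exact ⟨⟨S.c j k, S.c k j, by rw [hc j k, hone], hone⟩, rfl⟩

def HasUnitLeadingTerm (p : A) (γ : Fin n → ℕ) : Prop :=
  ∃ C : R, IsUnit C ∧ ∃ q ∈ S.degreeLT (totalDeg γ), p = S.ι C * S.mono γ + q

variable {S}

lemma hasUnitLeadingTerm_mono (γ : Fin n → ℕ) : S.HasUnitLeadingTerm (S.mono γ) γ :=
  ⟨1, isUnit_one, 0, zero_mem _, by simp⟩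

namespace HasUnitLeadingTerm

variable {p : A} {γ : Fin n → ℕ}

lemma mem_degreeLT (h : S.HasUnitLeadingTerm p γ) : p ∈ S.degreeLT (totalDeg γ + 1) := by
  obtain ⟨C, -, q, hq, rfl⟩ := h
  exact add_mem (S.ι_mul_mono_mem_supported _ (Nat.lt_succ_self _))
    (S.degreeLT_mono (Nat.le_succ _) hq)

lemma ι_mul (h : S.HasUnitLeadingTerm p γ) {r : R} (hr : IsUnit r) :
    S.HasUnitLeadingTerm (S.ι r * p) γ := by
  obtain ⟨C, hC, q, hq, rfl⟩ := h
  exact ⟨r * C, hr.mul hC, S.ι r * q, S.ι_mul_mem_supported r hq, by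
    rw [mul_add, map_mul, mul_assoc]⟩

lemma add_mem (h : S.HasUnitLeadingTerm p γ) {q : A} (hq : q ∈ S.degreeLT (totalDeg γ)) :
    S.HasUnitLeadingTerm (p + q) γ := by
  obtain ⟨C, hC, q', hq', rfl⟩ := h
  exact ⟨C, hC, q' + q, AddSubgroup.add_mem _ hq' hq, by rw [add_assoc]⟩

lemma eq_zero_of_ι_mul_add_eq_zero (h : S.HasUnitLeadingTerm p γ) {q : A}
    (hq : q ∈ S.degreeLT (totalDeg γ)) {r : R} (h0 : S.ι r * p + q = 0) : r = 0 := by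
  obtain ⟨C, hC, q', hq', rfl⟩ := h
  have hγ : γ ∉ {μ | totalDeg μ < totalDeg γ} := lt_irrefl (totalDeg γ)
  have := congrArg (S.repr · γ) h0
  rw [mul_add, ← mul_assoc, ← map_mul, add_assoc, S.repr_ι_mul_mono_add_apply
    (AddSubgroup.add_mem _ (S.ι_mul_mem_supported r hq') hq) _ hγ] at this
  exact (hC.mul_left_eq_zero).mp (by simpa using this)

end HasUnitLeadingTerm

lemma mul_x_mem_degreeLT_of {m : ℕ} {j : Fin n}
    (h : ∀ μ, totalDeg μ < m → S.HasUnitLeadingTerm (S.mono μ * S.x j) (μ + Pi.single j 1))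
    {p : A} (hp : p ∈ S.degreeLT m) : p * S.x j ∈ S.degreeLT (m + 1) :=
  S.mul_mem_supported hp fun μ hμ => S.degreeLT_mono
    (by rw [totalDeg_add, totalDeg_single]; exact Nat.succ_le_succ hμ) (h μ hμ).mem_degreeLT

/-- The inductive step of `hasUnitLeadingTerm_mono_mul_x` when `x_j` has to be moved past `x_k`:
`x^γ x_k x_j = x^γ (c_{j,k} x_j x_k + ⋯)`, and `σ^γ(c_{j,k})` is a unit. -/
lemma hasUnitLeadingTerm_mono_add_single_mul_x (hc : S.CCentral) {γ : Fin n → ℕ} {j k : Fin n}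
    (hγ : ∀ i, k < i → γ i = 0) (hjk : j < k)
    (ih : ∀ μ, totalDeg μ ≤ totalDeg γ → ∀ j,
      S.HasUnitLeadingTerm (S.mono μ * S.x j) (μ + Pi.single j 1)) :
    S.HasUnitLeadingTerm (S.mono (γ + Pi.single k 1) * S.x j)
      (γ + Pi.single k 1 + Pi.single j 1) := by
  have hdeg : totalDeg (γ + Pi.single k 1 + Pi.single j 1) = totalDeg γ + 2 := by
    simp only [totalDeg_add, totalDeg_single]
  have mul_x : ∀ m ≤ totalDeg γ + 1, ∀ p ∈ S.degreeLT m, ∀ i, p * S.x i ∈ S.degreeLT (m + 1) :=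
    fun m hm _ hp i => mul_x_mem_degreeLT_of (fun μ hμ => ih μ (by omega) i) hp
  obtain ⟨r₀, r, hquad⟩ := S.quad j k
  rw [sub_eq_iff_eq_add'] at hquad
  set L := S.ι r₀ + ∑ i, S.ι (r i) * S.x i
  obtain ⟨q₁, hq₁, e₁⟩ := S.exists_mono_mul_ι γ (S.c j k)
  obtain ⟨C, hC, q₂, hq₂, e₂⟩ := ih γ le_rfl j
  have hq₁' : q₁ ∈ S.degreeLT (totalDeg γ) :=
    S.supported_mono (fun μ hμ => totalDeg_lt_totalDeg hμ) hq₁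
  have hL : S.mono γ * L ∈ S.degreeLT (totalDeg γ + 2) := by
    simp only [L, mul_add, Finset.mul_sum, ← mul_assoc]
    exact AddSubgroup.add_mem _ (S.degreeLT_mono (Nat.le_succ _) (S.mono_mul_ι_mem_degreeLT γ r₀))
      (AddSubgroup.sum_mem _ fun i _ => mul_x _ le_rfl _ (S.mono_mul_ι_mem_degreeLT γ _) i)
  have hrest : S.ι (S.sigmaPow γ (S.c j k)) * (q₂ * S.x k) + q₁ * S.x j * S.x k + S.mono γ * L
      ∈ S.degreeLT (totalDeg (γ + Pi.single k 1 + Pi.single j 1)) := by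
    rw [hdeg]
    refine AddSubgroup.add_mem _ (AddSubgroup.add_mem _ (S.ι_mul_mem_supported _ ?_) ?_) hL
    · rw [totalDeg_add, totalDeg_single] at hq₂
      exact mul_x _ le_rfl _ hq₂ k
    · exact mul_x _ le_rfl _ (mul_x _ (Nat.le_succ _) _ hq₁' j) k
  have hshift :
      S.mono (γ + Pi.single j 1) * S.x k = S.mono (γ + Pi.single k 1 + Pi.single j 1) := by
    rw [← S.mono_add_single fun i hi => by rw [add_single_eq_of_lt (hjk.trans hi), hγ i hi],
      add_right_comm]
  have hexp : S.mono (γ + Pi.single k 1) * S.x j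
      = S.ι (S.sigmaPow γ (S.c j k)) * (S.ι C * S.mono (γ + Pi.single k 1 + Pi.single j 1))
        + (S.ι (S.sigmaPow γ (S.c j k)) * (q₂ * S.x k) + q₁ * S.x j * S.x k + S.mono γ * L) := by
    calc S.mono (γ + Pi.single k 1) * S.x j
        = S.mono γ * S.ι (S.c j k) * (S.x j * S.x k) + S.mono γ * L := by
          rw [S.mono_add_single hγ, mul_assoc, hquad, mul_add, mul_assoc]
      _ = _ := by
          rw [e₁, add_mul, mul_assoc, ← mul_assoc (S.mono γ), e₂, ← hshift]
          simp only [add_mul, mul_add, mul_assoc]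
          abel
  rw [hexp]
  exact (((hasUnitLeadingTerm_mono _).ι_mul hC).ι_mul
    (S.isUnit_sigmaPow γ (S.isUnit_c hc hjk))).add_mem hrest

lemma hasUnitLeadingTerm_mono_mul_x (hc : S.CCentral) (γ : Fin n → ℕ) (j : Fin n) :
    S.HasUnitLeadingTerm (S.mono γ * S.x j) (γ + Pi.single j 1) := by
  induction γ using expVec_induction generalizing j with
  | zero => simpa [mono_zero, ← S.mono_single j] using hasUnitLeadingTerm_mono (Pi.single j 1)
  | add_single γ k hγ ih =>
    rcases le_or_gt k j with hkj | hjk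
    · rw [← S.mono_add_single fun i hi => ?_]
      · exact hasUnitLeadingTerm_mono _
      · rw [add_single_eq_of_lt (hkj.trans_lt hi), hγ i (hkj.trans_lt hi)]
    · exact hasUnitLeadingTerm_mono_add_single_mul_x hc hγ hjk ih

lemma mul_x_mem_degreeLT (hc : S.CCentral) {m : ℕ} {p : A} (hp : p ∈ S.degreeLT m) (j : Fin n) :
    p * S.x j ∈ S.degreeLT (m + 1) :=
  mul_x_mem_degreeLT_of (fun μ _ => hasUnitLeadingTerm_mono_mul_x hc μ j) hp

lemma hasUnitLeadingTerm_mono_mul_mono (hc : S.CCentral) (γ β : Fin n → ℕ) :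
    S.HasUnitLeadingTerm (S.mono γ * S.mono β) (γ + β) := by
  induction β using expVec_induction with
  | zero => simpa [mono_zero] using hasUnitLeadingTerm_mono γ
  | add_single β k hβ ih =>
    obtain ⟨C, hC, q, hq, e⟩ := ih β le_rfl
    have hq' : q * S.x k ∈ S.degreeLT (totalDeg (γ + β + Pi.single k 1)) := by
      rw [totalDeg_add _ (Pi.single k 1), totalDeg_single]
      exact mul_x_mem_degreeLT hc hq k
    rw [S.mono_add_single hβ, ← mul_assoc, e, add_mul, mul_assoc, ← add_assoc]
    exact ((hasUnitLeadingTerm_mono_mul_x hc _ k).ι_mul hC).add_mem hq'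

lemma mul_mono_mem_degreeLT (hc : S.CCentral) {m : ℕ} {p : A} (hp : p ∈ S.degreeLT m)
    (β : Fin n → ℕ) : p * S.mono β ∈ S.degreeLT (m + totalDeg β) :=
  S.mul_mem_supported hp fun μ hμ => S.degreeLT_mono
    (by rw [totalDeg_add]; exact Nat.succ_le_of_lt (Nat.add_lt_add_right hμ _))
    (hasUnitLeadingTerm_mono_mul_mono hc μ β).mem_degreeLT

/-- The leading term of `(a x^α)(b x^β)` is `a σ^α(b) C x^{α+β}` with `C` a unit. -/
lemma mul_eq_zero_of_term_mul_term_eq_zero (hc : S.CCentral) (hSig : S.SigmaCompatible)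
    {a b : R} {α β : Fin n → ℕ} (h : S.ι a * S.mono α * (S.ι b * S.mono β) = 0) : a * b = 0 := by
  obtain ⟨q, hq, e⟩ := S.exists_mono_mul_ι α b
  have hq' : S.ι a * (q * S.mono β) ∈ S.degreeLT (totalDeg (α + β)) := by
    rw [totalDeg_add]
    exact S.ι_mul_mem_supported a <| mul_mono_mem_degreeLT hc
      (S.supported_mono (fun μ hμ => totalDeg_lt_totalDeg hμ) hq) β
  have hexp : S.ι a * S.mono α * (S.ι b * S.mono β)
      = S.ι (a * S.sigmaPow α b) * (S.mono α * S.mono β) + S.ι a * (q * S.mono β) := by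
    rw [mul_assoc, ← mul_assoc (S.mono α), e]
    simp only [add_mul, mul_add, map_mul, mul_assoc]
  rw [hexp] at h
  exact (hSig a b α).mp
    ((hasUnitLeadingTerm_mono_mul_mono hc α β).eq_zero_of_ι_mul_add_eq_zero hq' h)

variable (S) in
lemma exists_fin_expansion (p : A) {γ : Fin n → ℕ} (hγ : γ ∈ (S.repr p).support) :
    ∃ (t : ℕ) (X : Fin (t + 1) → Fin n → ℕ), Function.Injective X ∧ γ ∈ Set.range X ∧
      p = ∑ i, S.ι (S.repr p (X i)) * S.mono (X i) := by
  obtain ⟨t, ht⟩ := Nat.exists_eq_add_one_of_ne_zero (Finset.card_ne_zero_of_mem hγ)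
  let e := ((S.repr p).support.equivFin.trans (finCongr ht)).symm
  refine ⟨t, fun i => e i, Subtype.val_injective.comp e.injective,
    ⟨e.symm ⟨γ, hγ⟩, by simp⟩, ?_⟩
  conv_lhs => rw [← S.sum_repr p, ← Finset.sum_coe_sort]
  exact (e.sum_comp fun μ => S.ι (S.repr p μ) * S.mono μ).symm

lemma SDSkewArmendariz.term_mul_term_eq_zero (hArm : S.SDSkewArmendariz) {p q : A}
    (h : p * q = 0) (γ δ : Fin n → ℕ) :
    S.ι (S.repr p γ) * S.mono γ * (S.ι (S.repr q δ) * S.mono δ) = 0 := by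
  by_cases hγ : γ ∈ (S.repr p).support
  swap
  · simp [Finsupp.notMem_support_iff.mp hγ]
  by_cases hδ : δ ∈ (S.repr q).support
  swap
  · simp [Finsupp.notMem_support_iff.mp hδ]
  obtain ⟨t, X, hX, ⟨i, rfl⟩, hp⟩ := S.exists_fin_expansion p hγ
  obtain ⟨s, Y, hY, ⟨j, rfl⟩, hq⟩ := S.exists_fin_expansion q hδ
  exact hArm t s _ X _ Y hX hY (hp ▸ hq ▸ h) i j

lemma ι_repr_mul_eq_zero (hc : S.CCentral) (hSig : S.SigmaCompatible)
    (hArm : S.SDSkewArmendariz) {p q : A} (h : p * q = 0) (γ : Fin n → ℕ) :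
    S.ι (S.repr p γ) * q = 0 := by
  refine S.repr.injective ?_
  ext δ
  rw [repr_ι_mul, map_zero, Finsupp.smul_apply, smul_eq_mul, Finsupp.zero_apply]
  exact mul_eq_zero_of_term_mul_term_eq_zero hc hSig (hArm.term_mul_term_eq_zero h γ δ)

/-- Each step absorbs the chosen coefficient of the first factor into the second one. -/
lemma ι_mul_list_prod_eq_zero (hc : S.CCentral) (hSig : S.SigmaCompatible)
    (hArm : S.SDSkewArmendariz) {κ : Type*} (L : List κ) (p : κ → A) (γ : κ → Fin n → ℕ) (r : R)
    (h : S.ι r * (L.map p).prod = 0) : r * (L.map fun k => S.repr (p k) (γ k)).prod = 0 := by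
  induction L generalizing r with
  | nil =>
    rw [List.map_nil, List.prod_nil, mul_one, ← map_zero S.ι] at h
    simpa using S.ι_inj h
  | cons k L ih =>
    rw [List.map_cons, List.prod_cons, ← mul_assoc] at h
    have := ih _ (ι_repr_mul_eq_zero hc hSig hArm h (γ k))
    rwa [repr_ι_mul, Finsupp.smul_apply, smul_eq_mul, mul_assoc] at this

end SkewPBW

theorem sdSkewArmendariz_prod_coeffs_eq_zero_general {R A : Type*} [Ring R] [Ring A] {n : ℕ}
    (S : SkewPBW R A n) (hc : S.CCentral)
    (hSig : S.SigmaCompatible) (hArm : S.SDSkewArmendariz)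
    (l : ℕ) (m : Fin l → ℕ)
    (a : ∀ k : Fin l, Fin (m k + 1) → R)
    (X : ∀ k : Fin l, Fin (m k + 1) → Fin n → ℕ)
    (hX : ∀ k, Function.Injective (X k))
    (hprod : ((List.finRange l).map fun k => ∑ i, S.ι (a k i) * S.mono (X k i)).prod = 0)
    (idx : ∀ k : Fin l, Fin (m k + 1)) :
    ((List.finRange l).map fun k => a k (idx k)).prod = 0 := by
  have h := SkewPBW.ι_mul_list_prod_eq_zero hc hSig hArm (List.finRange l) _
    (fun k => X k (idx k)) 1 (by rwa [map_one, one_mul])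
  simpa only [S.repr_sum_apply_of_injective _ (hX _), one_mul] using h

/-- Let `A` be a skew PBW extension of `R` with the constants `c_{i,j}`
of condition (iv) central in `R`, where `R` is `Σ`-compatible and `(Σ,Δ)`-skew
Armendariz.  If `p₁ ⋯ p_l = 0` (`l ≥ 2`) in `A`, then for every choice of
coefficients `aₖ ∈ C_{pₖ}` (coefficients of the expansion of `pₖ` in the basis of
standard monomials), one has `a₁ a₂ ⋯ a_l = 0` in `R`. -/
theorem sdSkewArmendariz_prod_coeffs_eq_zero {R A : Type*} [Ring R] [Ring A] {n : ℕ}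
    (S : SkewPBW R A n) (hc : S.CCentral)
    (hSig : S.SigmaCompatible) (hArm : S.SDSkewArmendariz)
    (l : ℕ) (hl : 2 ≤ l) (m : Fin l → ℕ)
    (a : ∀ k : Fin l, Fin (m k + 1) → R)
    (X : ∀ k : Fin l, Fin (m k + 1) → Fin n → ℕ)
    (hX : ∀ k, Function.Injective (X k))
    (hprod : ((List.finRange l).map fun k => ∑ i, S.ι (a k i) * S.mono (X k i)).prod = 0)
    (idx : ∀ k : Fin l, Fin (m k + 1)) :
    ((List.finRange l).map fun k => a k (idx k)).prod = 0 :=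
  sdSkewArmendariz_prod_coeffs_eq_zero_general S hc hSig hArm l m a X hX hprod idx
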